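/- Let S be a set, Σ a non-principal ultrafilter on S, {F_i}_{i ∈ S} a family of fields, and F = ∏_{i ∈ S} F_i / Σ the ultraproduct field. Then there is a field embedding of the algebraic closure F̄ of F into the ultraproduct ∏_{i ∈ S} F̄_i / Σ of the algebraic closures F̄_i of the F_i, extending the natural embedding F → ∏_{i ∈ S} F̄_i / Σ induced by the inclusions F_i ⊆ F̄_i. -/

import Mathlib

/-!
An ultraproduct of algebraically closed fields is algebraically closed: a monic polynomial over
it lifts to a monic polynomial of the same degree over the product ring, and that one has a root
in every factor. So `∏ F̄ᵢ / Σ` is an algebraically closed field containing `F = ∏ Fᵢ / Σ`, and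
the inclusion extends to the algebraic extension `F̄` of `F`.
-/

/-- The ideal of the product ring `∀ i, R i` consisting of families vanishing on a set of
indices belonging to the ultrafilter `U`.  The quotient by this ideal is the ultraproduct
`∏_{i ∈ S} R_i / U`. -/
def ultraIdeal {S : Type*} (U : Ultrafilter S) (R : S → Type*) [∀ i, CommRing (R i)] :
    Ideal (∀ i, R i) where
  carrier := {a | {i | a i = 0} ∈ U}
  add_mem' {a b} ha hb := by
    refine U.toFilter.mem_of_superset (Filter.inter_mem ha hb) ?_
    intro i hi
    simp only [Set.mem_inter_iff, Set.mem_setOf_eq] at hi ⊢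
    rw [Pi.add_apply, hi.1, hi.2, add_zero]
  zero_mem' := by
    simp only [Set.mem_setOf_eq, Pi.zero_apply]
    exact Filter.univ_mem' fun i => trivial
  smul_mem' c a ha := by
    refine U.toFilter.mem_of_superset ha ?_
    intro i hi
    simp only [Set.mem_setOf_eq] at hi ⊢
    show c i * a i = 0
    rw [hi, mul_zero]

/-- The ultraproduct of fields is a field. -/
theorem ultra_isField {S : Type*} (U : Ultrafilter S) (F : S → Type*) [∀ i, Field (F i)] :
    IsField ((∀ i, F i) ⧸ ultraIdeal U F) := by
  refine ⟨⟨0, 1, ?_⟩, mul_comm, ?_⟩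
  · intro h
    have h1 : (1 : ∀ i, F i) ∈ ultraIdeal U F := by
      rw [← Ideal.Quotient.eq_zero_iff_mem, map_one, ← h]
    have : ({i | (1 : ∀ i, F i) i = 0} : Set S) = ∅ := by
      ext i; simp [one_ne_zero]
    have h2 : ({i | (1 : ∀ i, F i) i = 0} : Set S) ∈ U := h1
    rw [this] at h2
    exact Filter.empty_notMem (U : Filter S) h2
  · rintro a ha
    obtain ⟨a, rfl⟩ := Ideal.Quotient.mk_surjective a
    have hmem : a ∉ ultraIdeal U F := fun h => ha (Ideal.Quotient.eq_zero_iff_mem.mpr h)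
    have hc : {i | a i = 0}ᶜ ∈ U := (Ultrafilter.compl_mem_iff_notMem).mpr hmem
    refine ⟨Ideal.Quotient.mk _ (fun i => (a i)⁻¹), ?_⟩
    rw [← map_mul, ← map_one (Ideal.Quotient.mk (ultraIdeal U F)), Ideal.Quotient.eq]
    refine U.toFilter.mem_of_superset hc ?_
    intro i hi
    simp only [Set.mem_compl_iff, Set.mem_setOf_eq] at hi
    show a i * (a i)⁻¹ - 1 = 0
    rw [mul_inv_cancel₀ hi, sub_self]

/-- The field structure on the ultraproduct of fields. -/
noncomputable instance ultraField {S : Type*} (U : Ultrafilter S) (F : S → Type*)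
    [∀ i, Field (F i)] : Field ((∀ i, F i) ⧸ ultraIdeal U F) :=
  (ultra_isField U F).toField

/-- The natural ring homomorphism from the ultraproduct of the fields `F i` to the
ultraproduct of their algebraic closures, induced by the inclusions
`F i ⊆ AlgebraicClosure (F i)`. -/
noncomputable def ultraMapToClosure {S : Type*} (U : Ultrafilter S) (F : S → Type*)
    [∀ i, Field (F i)] :
    ((∀ i, F i) ⧸ ultraIdeal U F) →+*
      ((∀ i, AlgebraicClosure (F i)) ⧸ ultraIdeal U fun i => AlgebraicClosure (F i)) :=
  Ideal.Quotient.lift (ultraIdeal U F)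
    ((Ideal.Quotient.mk (ultraIdeal U fun i => AlgebraicClosure (F i))).comp
      (Pi.ringHom fun i =>
        (algebraMap (F i) (AlgebraicClosure (F i))).comp (Pi.evalRingHom F i)))
    (by
      intro a ha
      rw [RingHom.comp_apply, Ideal.Quotient.eq_zero_iff_mem]
      refine U.toFilter.mem_of_superset ha ?_
      intro i hi
      simp only [Set.mem_setOf_eq] at hi ⊢
      show algebraMap (F i) (AlgebraicClosure (F i)) (a i) = 0
      rw [hi, map_zero])

open Polynomial

theorem IsAlgClosed.of_surjective_of_monic_exists_root {R K : Type*} [CommRing R] [Field K]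
    (f : R →+* K) (hf : Function.Surjective f)
    (H : ∀ P : R[X], P.Monic → 0 < P.natDegree → ∃ r, P.IsRoot r) : IsAlgClosed K := by
  refine IsAlgClosed.of_exists_root K fun p hmonic hirr => ?_
  obtain ⟨P, rfl, hdeg, hPmonic⟩ :=
    lifts_and_natDegree_eq_and_monic (mem_lifts_of_surjective hf p) hmonic
  obtain ⟨r, hr⟩ := H P hPmonic (hdeg ▸ hirr.natDegree_pos)
  exact ⟨f r, by rw [eval_map, eval₂_hom, hr.eq_zero, map_zero]⟩

theorem Polynomial.eval_pi_apply {ι : Type*} {R : ι → Type*} [∀ i, CommSemiring (R i)]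
    (P : (∀ i, R i)[X]) (r : ∀ i, R i) (i : ι) :
    P.eval r i = (P.map (Pi.evalRingHom R i)).eval (r i) := by
  rw [eval_map]
  exact (eval₂_hom (Pi.evalRingHom R i) r).symm

theorem Polynomial.Monic.exists_isRoot_pi {ι : Type*} {K : ι → Type*} [∀ i, Field (K i)]
    [∀ i, IsAlgClosed (K i)] {P : (∀ i, K i)[X]} (hP : P.Monic) (hdeg : 0 < P.natDegree) :
    ∃ r, P.IsRoot r := by
  have hdeg_i (i : ι) : (P.map (Pi.evalRingHom K i)).degree ≠ 0 := by
    rw [degree_eq_natDegree (hP.map _).ne_zero, hP.natDegree_map]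
    exact_mod_cast hdeg.ne'
  choose r hr using fun i => IsAlgClosed.exists_root _ (hdeg_i i)
  exact ⟨r, _root_.funext fun i => (P.eval_pi_apply r i).trans (hr i)⟩

theorem isAlgClosed_ultraproduct {S : Type*} (U : Ultrafilter S) (K : S → Type*)
    [∀ i, Field (K i)] [∀ i, IsAlgClosed (K i)] :
    IsAlgClosed ((∀ i, K i) ⧸ ultraIdeal U K) :=
  IsAlgClosed.of_surjective_of_monic_exists_root _ Ideal.Quotient.mk_surjective
    fun _ hP hdeg => hP.exists_isRoot_pi hdeg

theorem algebraicClosure_embeds_ultraproduct_general {S : Type*} (U : Ultrafilter S)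
    (F : S → Type*) [∀ i, Field (F i)] :
    ∃ ψ : AlgebraicClosure ((∀ i, F i) ⧸ ultraIdeal U F) →+*
        ((∀ i, AlgebraicClosure (F i)) ⧸ ultraIdeal U fun i => AlgebraicClosure (F i)),
      ∀ x : (∀ i, F i) ⧸ ultraIdeal U F,
        ψ (algebraMap ((∀ i, F i) ⧸ ultraIdeal U F)
            (AlgebraicClosure ((∀ i, F i) ⧸ ultraIdeal U F)) x) =
          ultraMapToClosure U F x := by
  have := isAlgClosed_ultraproduct U fun i => AlgebraicClosure (F i)
  let := (ultraMapToClosure U F).toAlgebra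
  have := Module.isTorsionFree_iff_algebraMap_injective.mpr (ultraMapToClosure U F).injective
  exact ⟨IsAlgClosed.lift.toRingHom, IsAlgClosed.lift.commutes⟩

/-- The algebraic closure of the ultraproduct `F = ∏ F_i / U` of fields embeds into the
ultraproduct `∏ F̄_i / U` of the algebraic closures, extending the natural embedding
`F → ∏ F̄_i / U`. -/
theorem algebraicClosure_embeds_ultraproduct {S : Type*} (U : Ultrafilter S)
    (hU : ∀ s : Set S, s.Finite → s ∉ U) (F : S → Type*) [∀ i, Field (F i)] :
    ∃ ψ : AlgebraicClosure ((∀ i, F i) ⧸ ultraIdeal U F) →+*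
        ((∀ i, AlgebraicClosure (F i)) ⧸ ultraIdeal U fun i => AlgebraicClosure (F i)),
      ∀ x : (∀ i, F i) ⧸ ultraIdeal U F,
        ψ (algebraMap ((∀ i, F i) ⧸ ultraIdeal U F)
            (AlgebraicClosure ((∀ i, F i) ⧸ ultraIdeal U F)) x) =
          ultraMapToClosure U F x :=
  algebraicClosure_embeds_ultraproduct_general U F
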